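/- arXiv:2109.03567 — 3 statements merged into one kernel-verified Lean document; each statement's English description precedes it below -/
import Mathlib

section
/- For all vectors x, y in ℝ^N and every real γ ≥ 1, one has (|x|^{2γ-2} x - |y|^{2γ-2} y) · (x - y) ≥ (1 / 2^{2γ-1}) |x - y|^{2γ}. -/
/-!
Put `p = 2γ - 2`, `a = |x|^p` and `b = |y|^p`. Polarization gives
`(a x - b y) · (x - y) = (a + b) |x - y|² / 2 + (a - b) (|x|² - |y|²) / 2`,
and the last term is nonnegative because `t ↦ t^p` and `t ↦ t²` are both monotone on `[0, ∞)`.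
On the other hand `|x - y|^p ≤ (|x| + |y|)^p ≤ 2^p max(|x|, |y|)^p ≤ 2^p (a + b)`, so
`|x - y|^{p+2} ≤ 2^p (a + b) |x - y|² ≤ 2^{p+1} (a x - b y) · (x - y)`.
-/

open Real InnerProductSpace

namespace Real

theorem add_rpow_le_two_rpow_mul_add_rpow {a b p : ℝ} (ha : 0 ≤ a) (hb : 0 ≤ b) (hp : 0 ≤ p) :
    (a + b) ^ p ≤ 2 ^ p * (a ^ p + b ^ p) := by
  have hmax : 0 ≤ max a b := le_max_of_le_left ha
  calc (a + b) ^ p ≤ (2 * max a b) ^ p := by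
        gcongr
        linarith [le_max_left a b, le_max_right a b]
    _ = 2 ^ p * max a b ^ p := mul_rpow zero_le_two hmax
    _ ≤ 2 ^ p * (a ^ p + b ^ p) := by
        gcongr
        rcases max_choice a b with h | h <;> rw [h] <;>
          linarith [rpow_nonneg ha p, rpow_nonneg hb p]

theorem sub_rpow_mul_sub_sq_nonneg {a b p : ℝ} (ha : 0 ≤ a) (hb : 0 ≤ b) (hp : 0 ≤ p) :
    0 ≤ (a ^ p - b ^ p) * (a ^ 2 - b ^ 2) := by
  rcases le_total a b with h | h
  · exact mul_nonneg_of_nonpos_of_nonpos (sub_nonpos.2 (rpow_le_rpow ha h hp))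
      (sub_nonpos.2 (pow_le_pow_left₀ ha h 2))
  · exact mul_nonneg (sub_nonneg.2 (rpow_le_rpow hb h hp))
      (sub_nonneg.2 (pow_le_pow_left₀ hb h 2))

end Real

theorem norm_sub_rpow_le_two_rpow_mul {E : Type*} [SeminormedAddGroup E] (x y : E) {p : ℝ}
    (hp : 0 ≤ p) :
    ‖x - y‖ ^ p ≤ 2 ^ p * (‖x‖ ^ p + ‖y‖ ^ p) :=
  (rpow_le_rpow (norm_nonneg _) (norm_sub_le x y) hp).trans
    (add_rpow_le_two_rpow_mul_add_rpow (norm_nonneg x) (norm_nonneg y) hp)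

section InnerProductSpace

variable {E : Type*} [NormedAddCommGroup E] [InnerProductSpace ℝ E]

theorem real_inner_smul_sub_smul_sub (a b : ℝ) (x y : E) :
    ⟪a • x - b • y, x - y⟫_ℝ =
      (a + b) * ‖x - y‖ ^ 2 / 2 + (a - b) * (‖x‖ ^ 2 - ‖y‖ ^ 2) / 2 := by
  simp only [inner_sub_left, inner_sub_right, real_inner_smul_left, real_inner_self_eq_norm_sq,
    real_inner_comm x y, norm_sub_sq_real]
  ring

theorem add_rpow_mul_norm_sub_sq_le_inner (x y : E) {p : ℝ} (hp : 0 ≤ p) :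
    (‖x‖ ^ p + ‖y‖ ^ p) * ‖x - y‖ ^ 2 / 2 ≤ ⟪‖x‖ ^ p • x - ‖y‖ ^ p • y, x - y⟫_ℝ := by
  rw [real_inner_smul_sub_smul_sub]
  have := sub_rpow_mul_sub_sq_nonneg (norm_nonneg x) (norm_nonneg y) hp
  linarith

theorem norm_sub_rpow_div_le_inner (x y : E) {p : ℝ} (hp : 0 ≤ p) :
    ‖x - y‖ ^ (p + 2) / 2 ^ (p + 1) ≤ ⟪‖x‖ ^ p • x - ‖y‖ ^ p • y, x - y⟫_ℝ := by
  have hsplit : ‖x - y‖ ^ (p + 2) = ‖x - y‖ ^ p * ‖x - y‖ ^ 2 := by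
    rw [rpow_add' (norm_nonneg _) (by linarith), rpow_two]
  have h2p : (2 : ℝ) ^ (p + 1) = 2 ^ p * 2 := by rw [rpow_add_one two_ne_zero]
  refine le_trans ?_ (add_rpow_mul_norm_sub_sq_le_inner x y hp)
  rw [hsplit, h2p, div_le_iff₀ (by positivity)]
  calc ‖x - y‖ ^ p * ‖x - y‖ ^ 2 ≤ 2 ^ p * (‖x‖ ^ p + ‖y‖ ^ p) * ‖x - y‖ ^ 2 := by
        gcongr
        exact norm_sub_rpow_le_two_rpow_mul x y hp
    _ = _ := by ring

end InnerProductSpace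

theorem stmt_0 (N : ℕ) (x y : EuclideanSpace ℝ (Fin N)) (γ : ℝ) (hγ : 1 ≤ γ) :
    (inner ℝ ((‖x‖ ^ (2 * γ - 2) : ℝ) • x - (‖y‖ ^ (2 * γ - 2) : ℝ) • y) (x - y) : ℝ) ≥
      (1 / 2 ^ (2 * γ - 1)) * ‖x - y‖ ^ (2 * γ) := by
  have h := norm_sub_rpow_div_le_inner x y (p := 2 * γ - 2) (by linarith)
  rw [show 2 * γ - 2 + 2 = 2 * γ by ring, show 2 * γ - 2 + 1 = 2 * γ - 1 by ring] at h
  rwa [ge_iff_le, one_div_mul_eq_div]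
end

section
/- For all vectors x, y in ℝ^N and every real γ with 1/2 < γ ≤ 1, one has (|x| + |y|)^{2-2γ} · ((|x|^{2γ-2} x - |y|^{2γ-2} y) · (x - y)) ≥ (2γ - 1) |x - y|^2. -/
/-!
Put `β = 2γ - 1 ∈ (0, 1]`, `a = ‖x‖`, `b = ‖y‖`, `t = ⟪x, y⟫`. Both sides depend on `x, y` only
through `a, b, t`, and their difference is affine in `t ∈ [-ab, ab]`, so it suffices to check the
endpoints `t = ±ab`, i.e. the collinear cases. There the inequality becomes a pair of scalar
estimates: `β (a - b) ≤ (a + b)^(1-β) (a^β - b^β)` for `b ≤ a`, which follows from weighted AM-GM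
`a^(1-β) b^β ≤ (1-β) a + β b`, and `a + b ≤ (a + b)^(1-β) (a^β + b^β)`, which follows from the
subadditivity of `s ↦ s^β`.
-/

open Real

lemma add_mul_nonneg_of_abs_le {p q r t : ℝ} (ht : |t| ≤ r) (hneg : 0 ≤ p - q * r)
    (hpos : 0 ≤ p + q * r) : 0 ≤ p + q * t := by
  obtain ⟨ht₁, ht₂⟩ := abs_le.1 ht
  rcases le_total 0 q with hq | hq <;> nlinarith

lemma real_inner_smul_sub_smul_sub_s1 {E : Type*} [NormedAddCommGroup E] [InnerProductSpace ℝ E]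
    (c d : ℝ) (x y : E) :
    inner ℝ (c • x - d • y) (x - y) = c * ‖x‖ ^ 2 + d * ‖y‖ ^ 2 - (c + d) * inner ℝ x y := by
  simp only [inner_sub_left, inner_sub_right, real_inner_smul_left, real_inner_self_eq_norm_sq,
    real_inner_comm y x]
  ring

lemma rpow_sub_one_mul_self {a β : ℝ} (ha : 0 ≤ a) (hβ : β ≠ 0) : a ^ (β - 1) * a = a ^ β := by
  simpa using (rpow_add_one' ha (by simpa using hβ : β - 1 + 1 ≠ 0)).symm

lemma mul_sub_le_add_rpow_mul_sub_rpow {a b β : ℝ} (hb : 0 ≤ b) (hba : b ≤ a) (hβ₀ : 0 ≤ β)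
    (hβ₁ : β ≤ 1) : β * (a - b) ≤ (a + b) ^ (1 - β) * (a ^ β - b ^ β) := by
  have ha : 0 ≤ a := hb.trans hba
  have amgm : b ^ β * a ^ (1 - β) ≤ β * b + (1 - β) * a :=
    geom_mean_le_arith_mean2_weighted hβ₀ (by linarith) hb ha (by ring)
  have hsplit : a ^ (1 - β) * a ^ β = a := by
    rw [← rpow_add' ha (by norm_num)]
    simp
  calc β * (a - b) ≤ a ^ (1 - β) * (a ^ β - b ^ β) := by linarith
    _ ≤ (a + b) ^ (1 - β) * (a ^ β - b ^ β) :=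
        mul_le_mul_of_nonneg_right (rpow_le_rpow ha (by linarith) (by linarith))
          (sub_nonneg.2 (rpow_le_rpow hb hba hβ₀))

lemma add_le_add_rpow_mul_add_rpow {a b β : ℝ} (ha : 0 ≤ a) (hb : 0 ≤ b) (hβ₀ : 0 ≤ β)
    (hβ₁ : β ≤ 1) : a + b ≤ (a + b) ^ (1 - β) * (a ^ β + b ^ β) := by
  have hs : 0 ≤ a + b := add_nonneg ha hb
  calc a + b = (a + b) ^ (1 - β) * (a + b) ^ β := by
        rw [← rpow_add' hs (by norm_num)]
        simp
    _ ≤ (a + b) ^ (1 - β) * (a ^ β + b ^ β) :=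
        mul_le_mul_of_nonneg_left (rpow_add_le_add_rpow ha hb hβ₀ hβ₁) (rpow_nonneg hs _)

lemma mul_sub_sq_le_add_rpow_mul {a b β : ℝ} (ha : 0 ≤ a) (hb : 0 ≤ b) (hβ₀ : 0 ≤ β)
    (hβ₁ : β ≤ 1) : β * (a - b) ^ 2 ≤ (a + b) ^ (1 - β) * (a ^ β - b ^ β) * (a - b) := by
  rcases le_total b a with hba | hab
  · have := mul_sub_le_add_rpow_mul_sub_rpow hb hba hβ₀ hβ₁
    nlinarith [mul_le_mul_of_nonneg_right this (sub_nonneg.2 hba)]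
  · have := mul_sub_le_add_rpow_mul_sub_rpow ha hab hβ₀ hβ₁
    rw [add_comm b a] at this
    nlinarith [mul_le_mul_of_nonneg_right this (sub_nonneg.2 hab)]

lemma mul_add_sq_le_add_rpow_mul {a b β : ℝ} (ha : 0 ≤ a) (hb : 0 ≤ b) (hβ₀ : 0 ≤ β)
    (hβ₁ : β ≤ 1) : β * (a + b) ^ 2 ≤ (a + b) ^ (1 - β) * (a ^ β + b ^ β) * (a + b) := by
  have hs : 0 ≤ a + b := add_nonneg ha hb
  nlinarith [mul_le_mul_of_nonneg_right (add_le_add_rpow_mul_add_rpow ha hb hβ₀ hβ₁) hs,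
    mul_nonneg (sub_nonneg.2 hβ₁) (mul_nonneg hs hs)]

lemma rpow_gram_inequality {a b t β : ℝ} (ha : 0 ≤ a) (hb : 0 ≤ b) (ht : |t| ≤ a * b)
    (hβ₀ : 0 < β) (hβ₁ : β ≤ 1) :
    β * (a ^ 2 - 2 * t + b ^ 2) ≤
      (a + b) ^ (1 - β) *
        (a ^ (β - 1) * a ^ 2 + b ^ (β - 1) * b ^ 2 - (a ^ (β - 1) + b ^ (β - 1)) * t) := by
  set A := (a + b) ^ (1 - β)
  set c := a ^ (β - 1)
  set d := b ^ (β - 1)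
  have hca : c * a = a ^ β := rpow_sub_one_mul_self ha hβ₀.ne'
  have hdb : d * b = b ^ β := rpow_sub_one_mul_self hb hβ₀.ne'
  have hcollinear := mul_sub_sq_le_add_rpow_mul ha hb hβ₀.le hβ₁
  have hopposite := mul_add_sq_le_add_rpow_mul ha hb hβ₀.le hβ₁
  rw [← hca, ← hdb] at hcollinear hopposite
  have := add_mul_nonneg_of_abs_le (p := A * (c * a ^ 2 + d * b ^ 2) - β * (a ^ 2 + b ^ 2))
    (q := 2 * β - A * (c + d)) ht (by linarith) (by linarith)
  linarith

theorem stmt_1 (N : ℕ) (x y : EuclideanSpace ℝ (Fin N)) (γ : ℝ) (hγ₁ : 1 / 2 < γ)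
    (hγ₂ : γ ≤ 1) :
    (‖x‖ + ‖y‖) ^ (2 - 2 * γ) *
        (inner ℝ ((‖x‖ ^ (2 * γ - 2) : ℝ) • x - (‖y‖ ^ (2 * γ - 2) : ℝ) • y) (x - y) : ℝ) ≥
      (2 * γ - 1) * ‖x - y‖ ^ 2 := by
  have hgram := rpow_gram_inequality (norm_nonneg x) (norm_nonneg y) (abs_real_inner_le_norm x y)
    (β := 2 * γ - 1) (by linarith) (by linarith)
  rw [show 2 - 2 * γ = 1 - (2 * γ - 1) by ring, show 2 * γ - 2 = 2 * γ - 1 - 1 by ring,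
    real_inner_smul_sub_smul_sub_s1, norm_sub_sq_real]
  linarith
end

section
/- Let h : [0, T₀] → ℝ be continuous and nonnegative, and let ε, δ, b > 0 be such that h(τ) ≤ ε·h(τ)^{1+δ} + b for every τ ∈ [0, T₀]. If ε ≤ δ^δ / ((b+δ)^δ (1+δ)^{1+δ}) and h(0) ≤ 1/(ε(1+δ))^{1/δ}, then h(τ) ≤ 1/(ε(1+δ))^{1/δ} for every τ ∈ [0, T₀]. -/
theorem stmt_2 (T₀ : ℝ) (hT₀ : 0 < T₀) (h : ℝ → ℝ)
    (hcont : ContinuousOn h (Set.Icc 0 T₀))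
    (hnonneg : ∀ τ ∈ Set.Icc 0 T₀, 0 ≤ h τ)
    (ε δ b : ℝ) (hε : 0 < ε) (hδ : 0 < δ) (hb : 0 < b)
    (hineq : ∀ τ ∈ Set.Icc 0 T₀, h τ ≤ ε * h τ ^ (1 + δ) + b)
    (hεsmall : ε ≤ δ ^ δ / ((b + δ) ^ δ * (1 + δ) ^ (1 + δ)))
    (h0 : h 0 ≤ 1 / (ε * (1 + δ)) ^ (1 / δ)) :
    ∀ τ ∈ Set.Icc 0 T₀, h τ ≤ 1 / (ε * (1 + δ)) ^ (1 / δ) := by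
  set M : ℝ := 1 / (ε * (1 + δ)) ^ (1 / δ) with hMdef
  have h1δ : (0:ℝ) < 1 + δ := by linarith
  have hA : (0:ℝ) < ε * (1 + δ) := mul_pos hε h1δ
  have hApow : (0:ℝ) < (ε * (1 + δ)) ^ (1 / δ) := Real.rpow_pos_of_pos hA _
  have hMpos : 0 < M := by positivity
  -- M ^ δ = (ε (1+δ))⁻¹
  have hMδ : M ^ δ = (ε * (1 + δ))⁻¹ := by
    rw [hMdef, one_div, ← Real.rpow_neg hA.le, ← Real.rpow_mul hA.le]
    rw [show -(1 / δ) * δ = -1 by field_simp]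
    exact Real.rpow_neg_one _
  -- bound: ε (1+δ) ≤ (δ / ((b+δ)(1+δ)))^δ
  have hbδ : (0:ℝ) < b + δ := by linarith
  have hq : (0:ℝ) < δ / ((b + δ) * (1 + δ)) := by positivity
  have hstep : ε * (1 + δ) ≤ (δ / ((b + δ) * (1 + δ))) ^ δ := by
    have h1 : (1 + δ) ^ (1 + δ) = (1 + δ) * (1 + δ) ^ δ := by
      rw [Real.rpow_add h1δ, Real.rpow_one]
    have h2 : (δ / ((b + δ) * (1 + δ))) ^ δ
        = δ ^ δ / ((b + δ) ^ δ * (1 + δ) ^ δ) := by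
      rw [Real.div_rpow hδ.le (by positivity), Real.mul_rpow hbδ.le h1δ.le]
    rw [h2]
    rw [h1] at hεsmall
    have hpos1 : (0:ℝ) < (b + δ) ^ δ := Real.rpow_pos_of_pos hbδ _
    have hpos2 : (0:ℝ) < (1 + δ) ^ δ := Real.rpow_pos_of_pos h1δ _
    rw [le_div_iff₀ (by positivity)] at hεsmall ⊢
    calc ε * (1 + δ) * ((b + δ) ^ δ * (1 + δ) ^ δ)
        = ε * ((b + δ) ^ δ * ((1 + δ) * (1 + δ) ^ δ)) := by ring
      _ ≤ δ ^ δ := hεsmall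
  -- hence M ≥ (b+δ)(1+δ)/δ
  have hMbig : (b + δ) * (1 + δ) / δ ≤ M := by
    have := Real.rpow_le_rpow hA.le hstep (le_of_lt (by positivity : (0:ℝ) < 1/δ))
    rw [← Real.rpow_mul hq.le, show δ * (1/δ) = 1 by field_simp, Real.rpow_one] at this
    have h3 : (b + δ) * (1 + δ) / δ = 1 / (δ / ((b + δ) * (1 + δ))) := by
      field_simp
    rw [h3, hMdef]
    exact one_div_le_one_div_of_le hApow this
  -- key barrier: ε M^{1+δ} + b < M
  have hkey : ε * M ^ (1 + δ) + b < M := by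
    have hM1δ : M ^ (1 + δ) = M * M ^ δ := by
      rw [Real.rpow_add hMpos, Real.rpow_one]
    have : ε * M ^ (1 + δ) = M / (1 + δ) := by
      rw [hM1δ, hMδ]; field_simp
    rw [this]
    have hMδbig : b + δ ≤ M * δ / (1 + δ) := by
      rw [div_le_iff₀ hδ] at hMbig
      rw [le_div_iff₀ h1δ]
      nlinarith
    have : M / (1 + δ) + (M * δ / (1 + δ)) = M := by field_simp
    nlinarith [hMδbig, this]
  intro τ hτ
  by_contra hcon
  push_neg at hcon
  have hsub : Set.Icc (0:ℝ) τ ⊆ Set.Icc 0 T₀ := Set.Icc_subset_Icc_right hτ.2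
  have hivt := intermediate_value_Icc hτ.1 (hcont.mono hsub)
  have hMmem : M ∈ Set.Icc (h 0) (h τ) := ⟨h0, hcon.le⟩
  obtain ⟨τ', hτ', hτ'M⟩ := hivt hMmem
  have := hineq τ' (hsub hτ')
  rw [hτ'M] at this
  linarith [hkey]
end
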